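/- Let ℓ be an odd prime, q an integer not divisible by ℓ, and write ℓ − 1 = 2ⁿ·m with m odd. Then −1 lies in the cyclic subgroup of (ℤ/ℓℤ)× generated by q if and only if the congruence x^{2ⁿ} ≡ q (mod ℓ) has no integer solution. -/

import Mathlib

/-!
Let `d` be the order of `u` in `(ℤ/ℓℤ)ˣ`, a group of order `2ⁿ m` with `m` odd. Since `-1` is the
only unit of order `2`, it is a power of `u` iff `d` is even. On the other hand `u` is a `2ⁿ`-th
power iff `d` is odd: a `2ⁿ`-th power is killed by `m`, and conversely when `d` is prime to `2ⁿ`,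
raising to the `2ⁿ`-th power permutes the powers of `u`.
-/

open Subgroup

theorem Nat.exists_eq_pow_mul_and_coprime_of_not_pow_succ_dvd {p N n : ℕ} (hp : p.Prime)
    (hn : p ^ n ∣ N) (hn' : ¬ p ^ (n + 1) ∣ N) : ∃ m, N = p ^ n * m ∧ (p ^ n).Coprime m := by
  obtain ⟨m, rfl⟩ := hn
  refine ⟨m, rfl, Nat.Coprime.pow_left n ((hp.coprime_iff_not_dvd).2 fun hpm => hn' ?_)⟩
  rw [pow_succ]
  exact Nat.mul_dvd_mul_left _ hpm

theorem exists_pow_eq_units_iff {M : Type*} [Monoid M] {k : ℕ} (hk : k ≠ 0) (u : Mˣ) :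
    (∃ x : M, x ^ k = u) ↔ ∃ y : Mˣ, y ^ k = u := by
  constructor
  · rintro ⟨x, hx⟩
    obtain ⟨y, rfl⟩ := (isUnit_pow_iff hk).1 (hx ▸ u.isUnit)
    exact ⟨y, Units.ext (by simpa using hx)⟩
  · rintro ⟨y, rfl⟩
    exact ⟨y, by simp⟩

theorem exists_pow_eq_iff_coprime_orderOf {G : Type*} [Group G] [Finite G] {k m : ℕ}
    (hcard : Nat.card G = k * m) (hkm : k.Coprime m) (g : G) :
    (∃ x, x ^ k = g) ↔ (orderOf g).Coprime k := by
  constructor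
  · rintro ⟨x, rfl⟩
    have hdvd : orderOf (x ^ k) ∣ m := by
      rw [orderOf_dvd_iff_pow_eq_one, ← pow_mul, ← hcard, pow_card_eq_one']
    exact (hkm.coprime_dvd_right hdvd).symm
  · intro hg
    obtain ⟨j, hj⟩ := exists_pow_eq_self_of_coprime hg.symm
    exact ⟨g ^ j, by rw [← pow_mul, mul_comm, pow_mul, hj]⟩

theorem Units.neg_one_mem_zpowers_iff {R : Type*} [CommRing R] [IsDomain R] (hR : ringChar R ≠ 2)
    {u : Rˣ} (hu : IsOfFinOrder u) : -1 ∈ zpowers u ↔ 2 ∣ orderOf u := by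
  have horder : orderOf (-1 : Rˣ) = 2 := by
    rw [← orderOf_units, Units.val_neg, Units.val_one, orderOf_neg_one, if_neg hR]
  constructor
  · intro h
    exact horder ▸ orderOf_dvd_of_mem_zpowers h
  · rintro ⟨e, he⟩
    have he0 : e ≠ 0 := by rintro rfl; exact hu.orderOf_pos.ne' he
    have hpow : orderOf ((u ^ e : Rˣ) : R) = 2 := by
      rw [orderOf_units, orderOf_pow_of_dvd he0 ⟨2, by rw [he, mul_comm]⟩, he,
        Nat.mul_div_cancel _ (Nat.pos_of_ne_zero he0)]
    have hneg : u ^ e = -1 := Units.ext (by simpa using (CharP.orderOf_eq_two_iff _ hR).1 hpow)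
    exact hneg ▸ pow_mem (mem_zpowers u) e

theorem neg_one_mem_iff_nonresidue_general (ℓ : ℕ) [Fact ℓ.Prime] (hodd : Odd ℓ)
    (q : ℤ)
    (n : ℕ) (hn : 2 ^ n ∣ ℓ - 1) (hn' : ¬ 2 ^ (n + 1) ∣ ℓ - 1)
    (u : (ZMod ℓ)ˣ) (hu : (u : ZMod ℓ) = (q : ZMod ℓ)) :
    (-1 : (ZMod ℓ)ˣ) ∈ Subgroup.zpowers u ↔
      ¬ ∃ x : ZMod ℓ, x ^ (2 ^ n) = (q : ZMod ℓ) := by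
  have hchar : ringChar (ZMod ℓ) ≠ 2 := by
    rw [ZMod.ringChar_zmod_n]; rintro rfl; exact Nat.not_odd_iff_even.2 even_two hodd
  have hn0 : n ≠ 0 := by
    rintro rfl
    exact hn' (by simpa using (Nat.Odd.sub_odd hodd odd_one).two_dvd)
  obtain ⟨m, hm, hcop⟩ :=
    Nat.exists_eq_pow_mul_and_coprime_of_not_pow_succ_dvd Nat.prime_two hn hn'
  have hcard : Nat.card (ZMod ℓ)ˣ = 2 ^ n * m := by
    rw [Nat.card_eq_fintype_card, ZMod.card_units, hm]
  rw [← hu, exists_pow_eq_units_iff (by positivity), exists_pow_eq_iff_coprime_orderOf hcard hcop,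
    Units.neg_one_mem_zpowers_iff hchar (isOfFinOrder_of_finite u),
    Nat.coprime_pow_right_iff (Nat.pos_of_ne_zero hn0), Nat.coprime_two_right,
    Nat.not_odd_iff_even, even_iff_two_dvd]

/-- `-1` lies in the subgroup of `(ℤ/ℓℤ)ˣ` generated by `q` iff `q` is a
`2ⁿ`-th power non-residue mod `ℓ`, where `2ⁿ ‖ ℓ - 1`. -/
theorem neg_one_mem_iff_nonresidue (ℓ : ℕ) [Fact ℓ.Prime] (hodd : Odd ℓ)
    (q : ℤ) (hq : ¬ (ℓ : ℤ) ∣ q)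
    (n : ℕ) (hn : 2 ^ n ∣ ℓ - 1) (hn' : ¬ 2 ^ (n + 1) ∣ ℓ - 1)
    (u : (ZMod ℓ)ˣ) (hu : (u : ZMod ℓ) = (q : ZMod ℓ)) :
    (-1 : (ZMod ℓ)ˣ) ∈ Subgroup.zpowers u ↔
      ¬ ∃ x : ZMod ℓ, x ^ (2 ^ n) = (q : ZMod ℓ) :=
  neg_one_mem_iff_nonresidue_general ℓ hodd q n hn hn' u hu
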